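/- arXiv:1303.6687 — 3 statements merged into one kernel-verified Lean document; each statement's English description precedes it below -/
import Mathlib

section
/- Let E^γ_{α,η}(z) = Σ_{r≥0} (γ)_r z^r / (r! Γ(αr+η)) denote the generalised (Prabhakar) Mittag–Leffler function, where (γ)_r is the rising factorial. For real α, β, γ, ζ, σ > 0, a ∈ ℝ, and x > 0: ∫₀ˣ (x−t)^{β−1} E^γ_{α,β}(a(x−t)^α) · t^{ζ−1} E^σ_{α,ζ}(a t^α) dt = x^{β+ζ−1} E^{γ+σ}_{α,β+ζ}(a x^α). -/
open MeasureTheory Real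

/-- The generalised (Prabhakar) Mittag--Leffler function
`E^γ_{α,η}(z) = Σ_{r≥0} (γ)_r z^r / (r! Γ(αr+η))`,
where `(γ)_r = γ(γ+1)⋯(γ+r−1)` is the rising factorial. -/
noncomputable def mittagLeffler (α η γ z : ℝ) : ℝ :=
  ∑' r : ℕ, (∏ i ∈ Finset.range r, (γ + i)) * z ^ r / (r.factorial * Real.Gamma (α * r + η))

open Finset Filter intervalIntegral

lemma gamma_ratio_lb {α : ℝ} (hα : 0 < α) {y : ℝ} (hy : 1 < y) :
    (y - 1) ^ α * Real.Gamma y ≤ Real.Gamma (y + α) := by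
  have h0 : (0:ℝ) < y - 1 := by linarith
  have hΓy : 0 < Real.Gamma y := Real.Gamma_pos_of_pos (by linarith)
  have hΓy1 : 0 < Real.Gamma (y - 1) := Real.Gamma_pos_of_pos h0
  have hΓyα : 0 < Real.Gamma (y + α) := Real.Gamma_pos_of_pos (by linarith)
  have hrec : Real.Gamma y = (y - 1) * Real.Gamma (y - 1) := by
    have := Real.Gamma_add_one (s := y - 1) h0.ne'
    simpa using this
  have hslope := Real.convexOn_log_Gamma.slope_mono_adjacent
    (x := y - 1) (y := y) (z := y + α)
    (Set.mem_Ioi.2 h0) (Set.mem_Ioi.2 (by linarith)) (by linarith) (by linarith)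
  simp only [Function.comp] at hslope
  have hlogs : Real.log (Real.Gamma y) - Real.log (Real.Gamma (y - 1)) = Real.log (y - 1) := by
    rw [hrec, Real.log_mul h0.ne' hΓy1.ne']
    ring
  have h1 : (Real.log (Real.Gamma y) - Real.log (Real.Gamma (y-1))) / (y - (y-1)) =
      Real.log (y - 1) := by
    rw [hlogs]; simp
  rw [h1] at hslope
  have h2 : α * Real.log (y - 1) + Real.log (Real.Gamma y) ≤ Real.log (Real.Gamma (y + α)) := by
    have h3 : y + α - y = α := by ring
    rw [h3] at hslope
    have h4 := (le_div_iff₀ hα).mp hslope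
    have h5 := mul_comm α (Real.log (y - 1))
    linarith [h4]
  calc (y-1)^α * Real.Gamma y = Real.exp (α * Real.log (y-1) + Real.log (Real.Gamma y)) := by
        rw [Real.exp_add, Real.rpow_def_of_pos h0, Real.exp_log hΓy, mul_comm (Real.log (y-1)) α]
    _ ≤ Real.exp (Real.log (Real.Gamma (y + α))) := Real.exp_le_exp.mpr h2
    _ = Real.Gamma (y + α) := Real.exp_log hΓyα

lemma ml_summable {α μ τ : ℝ} (hα : 0 < α) (hμ : 0 < μ) (hτ : 0 < τ) (w : ℝ) :
    Summable (fun r : ℕ =>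
      (∏ i ∈ Finset.range r, (τ + i)) * w ^ r / (r.factorial * Real.Gamma (α * r + μ))) := by
  set f : ℕ → ℝ := fun r =>
    (∏ i ∈ Finset.range r, (τ + i)) * w ^ r / (r.factorial * Real.Gamma (α * r + μ)) with hf
  have hP : ∀ r : ℕ, 0 < ∏ i ∈ Finset.range r, (τ + (i : ℝ)) := by
    intro r
    exact Finset.prod_pos fun i _ => by positivity
  have hΓ : ∀ r : ℕ, 0 < Real.Gamma (α * r + μ) :=
    fun r => Real.Gamma_pos_of_pos (by positivity)
  set M : ℝ := 2 * (τ + 1) * (|w| + 1) with hM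
  have hM1 : 1 ≤ M := by nlinarith [abs_nonneg w]
  set C : ℝ := max 1 (M ^ (1/α : ℝ)) with hC
  apply summable_of_ratio_norm_eventually_le (r := 1/2) (by norm_num)
  have hev : ∀ᶠ n : ℕ in atTop, (C + 1 - μ) / α ≤ (n : ℝ) := by
    filter_upwards [eventually_ge_atTop ⌈(C + 1 - μ) / α⌉₊] with n hn
    exact (Nat.ceil_le.mp hn).trans (le_refl _) |>.trans (by norm_num) |>.trans (le_refl _)
  filter_upwards [hev] with n hn
  set y : ℝ := α * n + μ with hy
  have hyC : C ≤ y - 1 := by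
    have := (div_le_iff₀ hα).mp hn
    simp only [hy]; nlinarith
  have hC1 : (1:ℝ) ≤ C := le_max_left _ _
  have hy1 : 1 < y := by linarith
  -- Gamma (y + α) ≥ M * Gamma y
  have hMC : M ≤ (y - 1) ^ α := by
    have h1 : M ^ (1/α : ℝ) ≤ C := le_max_right _ _
    have h2 : (M ^ (1/α : ℝ)) ^ α ≤ (y - 1) ^ α := by
      apply Real.rpow_le_rpow (by positivity) (h1.trans hyC) hα.le
    rwa [← Real.rpow_mul (by linarith : (0:ℝ) ≤ M), one_div,
      inv_mul_cancel₀ hα.ne', Real.rpow_one] at h2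
  have hGam : M * Real.Gamma y ≤ Real.Gamma (y + α) := by
    have := gamma_ratio_lb hα hy1
    have hΓy : 0 < Real.Gamma y := Real.Gamma_pos_of_pos (by linarith)
    nlinarith
  have hnorm : ∀ m : ℕ, ‖f m‖ =
      (∏ i ∈ Finset.range m, (τ + (i:ℝ))) * |w| ^ m /
        (m.factorial * Real.Gamma (α * m + μ)) := by
    intro m
    simp only [hf]
    rw [Real.norm_eq_abs, abs_div, abs_mul, abs_pow, abs_of_pos (hP m),
      abs_of_pos (by positivity : (0:ℝ) < (m.factorial : ℝ) * Real.Gamma (α * m + μ))]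
  rw [hnorm, hnorm]
  have hΓy : 0 < Real.Gamma y := Real.Gamma_pos_of_pos (by linarith)
  have hΓyα : 0 < Real.Gamma (y + α) := Real.Gamma_pos_of_pos (by linarith)
  have e1 : α * ((n:ℝ) + 1) + μ = y + α := by simp only [hy]; ring
  push_cast
  rw [e1, Finset.prod_range_succ, pow_succ, Nat.factorial_succ]
  push_cast
  set P : ℝ := ∏ i ∈ Finset.range n, (τ + (i:ℝ)) with hPdef
  have hPpos : 0 < P := hP n
  set F : ℝ := (n.factorial : ℝ) with hF
  have hFpos : 0 < F := by positivity
  have hcomb : (τ + (n:ℝ)) * |w| * (2 * Real.Gamma y) ≤ ((n:ℝ) + 1) * Real.Gamma (y + α) := by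
    have ha : τ + (n:ℝ) ≤ (τ + 1) * ((n:ℝ) + 1) := by
      nlinarith [mul_nonneg hτ.le (Nat.cast_nonneg (α := ℝ) n), Nat.cast_nonneg (α := ℝ) n]
    have step1 : (τ + (n:ℝ)) * |w| ≤ (τ + 1) * ((n:ℝ) + 1) * (|w| + 1) :=
      calc (τ + (n:ℝ)) * |w| ≤ (τ + 1) * ((n:ℝ) + 1) * |w| :=
            mul_le_mul_of_nonneg_right ha (abs_nonneg w)
        _ ≤ (τ + 1) * ((n:ℝ) + 1) * (|w| + 1) :=
            mul_le_mul_of_nonneg_left (by linarith) (by positivity)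
    have step2 : (τ + 1) * ((n:ℝ) + 1) * (|w| + 1) * (2 * Real.Gamma y)
        ≤ ((n:ℝ) + 1) * Real.Gamma (y + α) := by
      have h6 : ((n:ℝ) + 1) * (M * Real.Gamma y) ≤ ((n:ℝ) + 1) * Real.Gamma (y + α) :=
        mul_le_mul_of_nonneg_left hGam (by positivity)
      calc (τ + 1) * ((n:ℝ) + 1) * (|w| + 1) * (2 * Real.Gamma y)
          = ((n:ℝ) + 1) * (M * Real.Gamma y) := by rw [hM]; ring
        _ ≤ ((n:ℝ) + 1) * Real.Gamma (y + α) := h6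
    calc (τ + (n:ℝ)) * |w| * (2 * Real.Gamma y)
        ≤ (τ + 1) * ((n:ℝ) + 1) * (|w| + 1) * (2 * Real.Gamma y) :=
          mul_le_mul_of_nonneg_right step1 (by positivity)
      _ ≤ ((n:ℝ) + 1) * Real.Gamma (y + α) := step2
  have hyΓ : Real.Gamma (α * (n:ℝ) + μ) = Real.Gamma y := rfl
  rw [hyΓ, ← mul_div_assoc, div_le_div_iff₀ (by positivity) (by positivity)]
  nlinarith [mul_le_mul_of_nonneg_left hcomb
    (by positivity : (0:ℝ) ≤ P * |w| ^ n * F / 2)]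

lemma vdm (γ σ : ℝ) : ∀ n : ℕ,
    ∑ k ∈ range (n + 1), (n.choose k : ℝ) * (∏ i ∈ range k, (γ + i)) *
      (∏ i ∈ range (n - k), (σ + i)) = ∏ i ∈ range n, (γ + σ + i) := by
  intro n
  induction n with
  | zero => simp
  | succ n ih =>
    set A : ℕ → ℝ := fun k => ∏ i ∈ range k, (γ + i) with hA
    set B : ℕ → ℝ := fun k => ∏ i ∈ range k, (σ + i) with hB
    have key : ∑ k ∈ range (n + 2), ((n+1).choose k : ℝ) * A k * B (n + 1 - k)
        = (∑ k ∈ range (n + 1), (n.choose k : ℝ) * A k * B (n + 1 - k))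
          + ∑ k ∈ range (n + 1), (n.choose k : ℝ) * A (k + 1) * B (n - k) := by
      rw [Finset.sum_range_succ' (fun k => ((n+1).choose k : ℝ) * A k * B (n + 1 - k))]
      have e1 : ∀ k ∈ range (n + 1),
          ((n+1).choose (k+1) : ℝ) * A (k+1) * B (n + 1 - (k+1))
          = (n.choose k : ℝ) * A (k+1) * B (n - k)
            + (n.choose (k+1) : ℝ) * A (k+1) * B (n - k) := by
        intro k _
        have h : n + 1 - (k + 1) = n - k := by omega
        rw [h, Nat.choose_succ_succ]
        push_cast
        ring
      rw [Finset.sum_congr rfl e1, Finset.sum_add_distrib]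
      have e2 : (∑ k ∈ range (n + 1), (n.choose (k+1) : ℝ) * A (k+1) * B (n - k))
          + ((n+1).choose 0 : ℝ) * A 0 * B (n + 1 - 0)
          = ∑ k ∈ range (n + 1), (n.choose k : ℝ) * A k * B (n + 1 - k) := by
        rw [Finset.sum_range_succ (fun k => (n.choose (k+1) : ℝ) * A (k+1) * B (n - k)) n,
          Finset.sum_range_succ' (fun k => (n.choose k : ℝ) * A k * B (n + 1 - k)) n]
        have hz : (n.choose (n+1) : ℝ) * A (n+1) * B (n - n) = 0 := by
          simp [Nat.choose_succ_self]
        rw [hz, add_zero]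
        congr 1
        · apply Finset.sum_congr rfl
          intro k hk
          have h : n + 1 - (k + 1) = n - k := by omega
          rw [h]
        · simp
      linarith [e2]
    rw [key]
    have e3 : ∀ k ∈ range (n + 1),
        (n.choose k : ℝ) * A k * B (n + 1 - k)
        = ((n.choose k : ℝ) * A k * B (n - k)) * (σ + (n - k : ℕ)) := by
      intro k hk
      have hkn : k ≤ n := by simpa using Nat.lt_succ_iff.mp (mem_range.mp hk)
      have : n + 1 - k = (n - k) + 1 := by omega
      rw [this, hB]
      simp only
      rw [Finset.prod_range_succ]
      ring
    have e4 : ∀ k ∈ range (n + 1),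
        (n.choose k : ℝ) * A (k + 1) * B (n - k)
        = ((n.choose k : ℝ) * A k * B (n - k)) * (γ + k) := by
      intro k _
      rw [hA]; simp only
      rw [Finset.prod_range_succ]
      ring
    rw [Finset.sum_congr rfl e3, Finset.sum_congr rfl e4, ← Finset.sum_add_distrib]
    have e5 : ∀ k ∈ range (n + 1),
        ((n.choose k : ℝ) * A k * B (n - k)) * (σ + (n - k : ℕ))
          + ((n.choose k : ℝ) * A k * B (n - k)) * (γ + k)
        = ((n.choose k : ℝ) * A k * B (n - k)) * (γ + σ + n) := by
      intro k hk
      have hkn : k ≤ n := Nat.lt_succ_iff.mp (mem_range.mp hk)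
      have hcast : ((n - k : ℕ) : ℝ) = (n : ℝ) - k := by
        push_cast [hkn]; ring
      rw [hcast]; ring
    rw [Finset.sum_congr rfl e5, ← Finset.sum_mul, ih, Finset.prod_range_succ]

section doub
variable {α μ γ σ : ℝ}

/-- canonical double term -/
noncomputable def Hterm (α μ γ σ v : ℝ) (p : ℕ × ℕ) : ℝ :=
  (∏ i ∈ range p.1, (γ + i)) * (∏ i ∈ range p.2, (σ + i)) /
      (p.1.factorial * p.2.factorial) * v ^ (p.1 + p.2) /
    Real.Gamma (α * (↑(p.1 + p.2)) + μ)

lemma prodpos {τ : ℝ} (hτ : 0 < τ) (r : ℕ) : 0 < ∏ i ∈ range r, (τ + (i:ℝ)) :=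
  Finset.prod_pos fun i _ => by positivity

lemma inner_antidiagonal (hα : 0 < α) (hμ : 0 < μ) (hγ : 0 < γ) (hσ : 0 < σ) (v : ℝ) (n : ℕ) :
    ∑ kl ∈ antidiagonal n, Hterm α μ γ σ v kl
      = (∏ i ∈ range n, (γ + σ + i)) * v ^ n / (n.factorial * Real.Gamma (α * n + μ)) := by
  rw [Finset.Nat.sum_antidiagonal_eq_sum_range_succ_mk]
  have hterm : ∀ k ∈ range (n + 1),
      Hterm α μ γ σ v (k, n - k)
        = ((n.choose k : ℝ) * (∏ i ∈ range k, (γ + i)) * (∏ i ∈ range (n - k), (σ + i)))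
            * (v ^ n / ((n.factorial : ℝ) * Real.Gamma (α * n + μ))) := by
    intro k hk
    have hkn : k ≤ n := Nat.lt_succ_iff.mp (mem_range.mp hk)
    have hsum : k + (n - k) = n := by omega
    have hfac : (n.choose k : ℝ) * k.factorial * (n - k).factorial = n.factorial := by
      exact_mod_cast congrArg (Nat.cast (R := ℝ))
        (Nat.choose_mul_factorial_mul_factorial hkn)
    have hk0 : ((k.factorial : ℝ)) ≠ 0 := by positivity
    have hnk0 : (((n - k).factorial : ℝ)) ≠ 0 := by positivity
    have hn0 : ((n.factorial : ℝ)) ≠ 0 := by positivity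
    have hchoose : (n.choose k : ℝ) = n.factorial / (k.factorial * (n - k).factorial) := by
      rw [eq_div_iff (by positivity)]
      linear_combination hfac
    simp only [Hterm, hsum]
    rw [hchoose]
    have hΓ : (0:ℝ) < Real.Gamma (α * n + μ) := Real.Gamma_pos_of_pos (by positivity)
    field_simp
  rw [Finset.sum_congr rfl hterm, ← Finset.sum_mul, vdm γ σ n]
  ring

lemma doub_summable (hα : 0 < α) (hμ : 0 < μ) (hγ : 0 < γ) (hσ : 0 < σ) (v : ℝ) :
    Summable (Hterm α μ γ σ v) := by
  have habs : ∀ p : ℕ × ℕ, ‖Hterm α μ γ σ v p‖ = Hterm α μ γ σ (|v|) p := by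
    intro p
    have hΓ : 0 < Real.Gamma (α * (↑(p.1 + p.2)) + μ) :=
      Real.Gamma_pos_of_pos (by positivity)
    simp only [Hterm, Real.norm_eq_abs, abs_div, abs_mul, abs_pow,
      abs_of_pos (prodpos hγ p.1), abs_of_pos (prodpos hσ p.2),
      abs_of_pos hΓ, Nat.abs_cast]
  apply Summable.of_norm
  simp only [habs]
  set e := Finset.HasAntidiagonal.sigmaAntidiagonalEquivProd (A := ℕ)
  rw [← Equiv.summable_iff e]
  have hnn : ∀ q : (Σ n : ℕ, antidiagonal n), 0 ≤ (Hterm α μ γ σ (|v|) ∘ e) q := by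
    rintro ⟨n, kl, h⟩
    have hΓ : 0 < Real.Gamma (α * (↑(kl.1 + kl.2)) + μ) :=
      Real.Gamma_pos_of_pos (by positivity)
    simp only [Function.comp, Hterm]
    positivity
  rw [summable_sigma_of_nonneg hnn]
  constructor
  · intro n
    exact (hasSum_fintype _).summable
  · apply Summable.congr (f := fun n : ℕ =>
      (∏ i ∈ range n, (γ + σ + i)) * |v| ^ n / (n.factorial * Real.Gamma (α * n + μ)))
    · exact ml_summable hα hμ (by positivity) (|v|)
    · intro n
      rw [← inner_antidiagonal hα hμ hγ hσ (|v|) n, ← Finset.tsum_subtype]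
      rfl

lemma doub_tsum (hα : 0 < α) (hμ : 0 < μ) (hγ : 0 < γ) (hσ : 0 < σ) (v : ℝ) :
    ∑' p : ℕ × ℕ, Hterm α μ γ σ v p
      = ∑' n : ℕ, (∏ i ∈ range n, (γ + σ + i)) * v ^ n /
          (n.factorial * Real.Gamma (α * n + μ)) := by
  set e := Finset.HasAntidiagonal.sigmaAntidiagonalEquivProd (A := ℕ)
  rw [← e.tsum_eq (Hterm α μ γ σ v)]
  rw [Summable.tsum_sigma' (f := fun q : (Σ n : ℕ, {x // x ∈ antidiagonal n}) => Hterm α μ γ σ v (e q))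
    (fun n => (hasSum_fintype _).summable)
    ((Equiv.summable_iff e).mpr (doub_summable hα hμ hγ hσ v))]
  apply tsum_congr
  intro n
  rw [← inner_antidiagonal hα hμ hγ hσ v n, ← Finset.tsum_subtype]
  rfl

lemma beta_integrable {p q x : ℝ} (hp : 0 < p) (hq : 0 < q) (hx : 0 < x) :
    IntervalIntegrable (fun t => t ^ (p - 1) * (x - t) ^ (q - 1)) volume 0 x := by
  have h1 : IntervalIntegrable (fun t => t ^ (p - 1) * (x - t) ^ (q - 1)) volume 0 (x/2) := by
    apply IntervalIntegrable.mul_continuousOn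
    · exact intervalIntegral.intervalIntegrable_rpow' (by linarith)
    · apply ContinuousOn.rpow_const
      · exact (continuous_const.sub continuous_id).continuousOn
      · intro t ht
        rw [Set.uIcc_of_le (by linarith : (0:ℝ) ≤ x/2)] at ht
        left
        have := ht.2
        intro h
        nlinarith [ht.1, ht.2]
  have h2 : IntervalIntegrable (fun t => t ^ (p - 1) * (x - t) ^ (q - 1)) volume (x/2) x := by
    have hint : IntervalIntegrable (fun t : ℝ => (x - t) ^ (q - 1)) volume (x/2) x := by
      have base : IntervalIntegrable (fun t : ℝ => t ^ (q - 1)) volume 0 (x/2) :=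
        intervalIntegral.intervalIntegrable_rpow' (by linarith)
      have h' := base.comp_sub_left x
      rw [sub_zero, (by ring : x - x/2 = x/2)] at h'
      exact h'.symm
    have hcont : ContinuousOn (fun t : ℝ => t ^ (p - 1)) (Set.uIcc (x/2) x) := by
      apply ContinuousOn.rpow_const continuous_id.continuousOn
      intro t ht
      rw [Set.uIcc_of_le (by linarith : x/2 ≤ x)] at ht
      left
      intro h
      simp only [id_eq] at h
      linarith [ht.1]
    exact hint.continuousOn_mul hcont
  exact h1.trans h2

lemma beta_value {p q x : ℝ} (hp : 0 < p) (hq : 0 < q) (hx : 0 < x) :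
    ∫ t in (0:ℝ)..x, t ^ (p - 1) * (x - t) ^ (q - 1)
      = x ^ (p + q - 1) * (Real.Gamma p * Real.Gamma q / Real.Gamma (p + q)) := by
  have hΓpq : (0:ℝ) < Real.Gamma (p + q) := Real.Gamma_pos_of_pos (by linarith)
  have hbeta : Complex.betaIntegral p q =
      ((Real.Gamma p * Real.Gamma q / Real.Gamma (p + q) : ℝ) : ℂ) := by
    have h := Complex.Gamma_mul_Gamma_eq_betaIntegral
      (s := (p:ℂ)) (t := (q:ℂ)) (by simpa using hp) (by simpa using hq)
    have hne : Complex.Gamma ((p:ℂ) + q) ≠ 0 := by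
      rw [(by push_cast; ring : ((p:ℂ) + q) = ((p + q : ℝ) : ℂ)), Complex.Gamma_ofReal]
      exact_mod_cast hΓpq.ne'
    rw [(by push_cast; ring : ((p:ℂ) + q) = ((p + q : ℝ) : ℂ)),
      Complex.Gamma_ofReal, (by norm_cast : ((p:ℂ)) = ((p:ℝ):ℂ)),
      (by norm_cast : ((q:ℂ)) = ((q:ℝ):ℂ)), Complex.Gamma_ofReal,
      Complex.Gamma_ofReal] at h
    push_cast
    rw [eq_div_iff (by exact_mod_cast hΓpq.ne' : ((Real.Gamma (p+q) : ℝ) : ℂ) ≠ 0)]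
    linear_combination -h
  have hscaled := Complex.betaIntegral_scaled (p:ℂ) (q:ℂ) hx
  -- LHS of hscaled equals complex coercion of our real integral
  have hcongr : (∫ t in (0:ℝ)..x, (t:ℂ) ^ ((p:ℂ) - 1) * ((x:ℂ) - t) ^ ((q:ℂ) - 1))
      = ((∫ t in (0:ℝ)..x, t ^ (p - 1) * (x - t) ^ (q - 1) : ℝ) : ℂ) := by
    rw [← intervalIntegral.integral_ofReal]
    rw [intervalIntegral.integral_of_le hx.le, intervalIntegral.integral_of_le hx.le]
    apply setIntegral_congr_fun measurableSet_Ioc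
    intro t ht
    dsimp only
    have ht0 : 0 ≤ t := ht.1.le
    have htx : 0 ≤ x - t := by linarith [ht.2]
    rw [(by push_cast; ring : ((p:ℂ) - 1) = ((p - 1 : ℝ) : ℂ)),
      (by push_cast; ring : ((q:ℂ) - 1) = ((q - 1 : ℝ) : ℂ)),
      (by push_cast; ring : ((x:ℂ) - (t:ℂ)) = ((x - t : ℝ) : ℂ)),
      ← Complex.ofReal_cpow ht0, ← Complex.ofReal_cpow htx]
    push_cast
    ring
  rw [hcongr, hbeta] at hscaled
  have hxpow : ((x:ℂ)) ^ ((p:ℂ) + q - 1) = ((x ^ (p + q - 1) : ℝ) : ℂ) := by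
    rw [(by push_cast; ring : ((p:ℂ) + q - 1) = ((p + q - 1 : ℝ) : ℂ)),
      ← Complex.ofReal_cpow hx.le]
  rw [hxpow] at hscaled
  have := hscaled
  rw [← Complex.ofReal_mul] at this
  exact_mod_cast this

lemma ml_expand {α η τ : ℝ} (hη : 0 < η) (a : ℝ) {u : ℝ} (hu : 0 < u) :
    u ^ (η - 1) * mittagLeffler α η τ (a * u ^ α)
      = ∑' r : ℕ, ((∏ i ∈ Finset.range r, (τ + i)) * a ^ r /
          (r.factorial * Real.Gamma (α * r + η))) * u ^ (η - 1 + α * r) := by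
  rw [mittagLeffler, ← tsum_mul_left]
  apply tsum_congr; intro r
  have h1 : (a * u ^ α) ^ r = a ^ r * u ^ (α * r) := by
    rw [mul_pow, ← Real.rpow_natCast (u ^ α) r, ← Real.rpow_mul hu.le]
  have h2 : u ^ (η - 1 + α * r) = u ^ (η - 1) * u ^ (α * r) := Real.rpow_add hu _ _
  rw [h1, h2]; ring

lemma abs_coeff {α η τ : ℝ} (hη : 0 < η) (hτ : 0 < τ) (hαr : 0 < α) (a : ℝ) (r : ℕ) :
    |(∏ i ∈ Finset.range r, (τ + (i:ℝ))) * a ^ r / (r.factorial * Real.Gamma (α * r + η))|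
      = (∏ i ∈ Finset.range r, (τ + (i:ℝ))) * |a| ^ r /
          (r.factorial * Real.Gamma (α * r + η)) := by
  have hΓ : 0 < Real.Gamma (α * r + η) := Real.Gamma_pos_of_pos (by positivity)
  rw [abs_div, abs_mul, abs_pow, abs_of_pos (prodpos hτ r),
    abs_of_pos (by positivity : (0:ℝ) < (r.factorial : ℝ) * Real.Gamma (α * r + η))]

lemma ml_expand_norm_summable {α η τ : ℝ} (hα : 0 < α) (hη : 0 < η) (hτ : 0 < τ)
    (a : ℝ) {u : ℝ} (hu : 0 < u) :
    Summable fun r : ℕ => ‖((∏ i ∈ Finset.range r, (τ + (i:ℝ))) * a ^ r /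
        (r.factorial * Real.Gamma (α * r + η))) * u ^ (η - 1 + α * r)‖ := by
  apply (((ml_summable hα hη hτ (|a| * u ^ α)).mul_left (u ^ (η - 1)))).congr
  intro r
  rw [Real.norm_eq_abs, abs_mul, abs_coeff hη hτ hα,
    abs_of_pos (Real.rpow_pos_of_pos hu _)]
  have h1 : (|a| * u ^ α) ^ r = |a| ^ r * u ^ (α * r) := by
    rw [mul_pow, ← Real.rpow_natCast (u ^ α) r, ← Real.rpow_mul hu.le]
  have h2 : u ^ (η - 1 + α * r) = u ^ (η - 1) * u ^ (α * r) := Real.rpow_add hu _ _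
  rw [h1, h2]; ring

lemma conv_term_value {α β ζ : ℝ} (hα : 0 < α) (hβ : 0 < β) (hζ : 0 < ζ) {x : ℝ} (hx : 0 < x)
    (c1 c2 : ℝ) (r s : ℕ) :
    ∫ t in Set.Ioo (0:ℝ) x, (c1 * (x - t) ^ (β - 1 + α * r)) * (c2 * t ^ (ζ - 1 + α * s))
      = c1 * c2 * (x ^ ((ζ + α * s) + (β + α * r) - 1) *
          (Real.Gamma (ζ + α * s) * Real.Gamma (β + α * r) /
            Real.Gamma ((ζ + α * s) + (β + α * r)))) := by
  have hbv := beta_value (p := ζ + α * s) (q := β + α * r)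
    (by positivity) (by positivity) hx
  rw [intervalIntegral.integral_of_le hx.le, integral_Ioc_eq_integral_Ioo] at hbv
  rw [show (ζ + α * (s:ℝ)) - 1 = ζ - 1 + α * s by ring,
    show (β + α * (r:ℝ)) - 1 = β - 1 + α * r by ring] at hbv
  have hre : (fun t => (c1 * (x - t) ^ (β - 1 + α * r)) * (c2 * t ^ (ζ - 1 + α * s)))
      = fun t => (c1 * c2) * (t ^ (ζ - 1 + α * s) * (x - t) ^ (β - 1 + α * r)) := by
    funext t; ring
  rw [hre, MeasureTheory.integral_const_mul, hbv, mul_assoc]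

lemma term_bridge {α β ζ γ σ x : ℝ} (hα : 0 < α) (hβ : 0 < β) (hζ : 0 < ζ)
    (hγ : 0 < γ) (hσ : 0 < σ) (hx : 0 < x) (b : ℝ) (r s : ℕ) :
    ((∏ i ∈ Finset.range r, (γ + (i:ℝ))) * b ^ r / (r.factorial * Real.Gamma (α * r + β)))
      * ((∏ i ∈ Finset.range s, (σ + (i:ℝ))) * b ^ s / (s.factorial * Real.Gamma (α * s + ζ)))
      * (x ^ ((ζ + α * s) + (β + α * r) - 1) *
          (Real.Gamma (ζ + α * s) * Real.Gamma (β + α * r) /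
            Real.Gamma ((ζ + α * s) + (β + α * r))))
      = x ^ (β + ζ - 1) * Hterm α (β + ζ) γ σ (b * x ^ α) (r, s) := by
  have hΓ1 : 0 < Real.Gamma (α * r + β) := Real.Gamma_pos_of_pos (by positivity)
  have hΓ2 : 0 < Real.Gamma (α * s + ζ) := Real.Gamma_pos_of_pos (by positivity)
  have hΓ3 : 0 < Real.Gamma (α * (↑(r + s)) + (β + ζ)) :=
    Real.Gamma_pos_of_pos (by positivity)
  have harg1 : ζ + α * (s:ℝ) = α * s + ζ := by ring
  have harg2 : β + α * (r:ℝ) = α * r + β := by ring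
  have harg3 : (ζ + α * (s:ℝ)) + (β + α * (r:ℝ)) = α * (↑(r + s)) + (β + ζ) := by
    push_cast; ring
  have hxpow : x ^ ((ζ + α * (s:ℝ)) + (β + α * (r:ℝ)) - 1)
      = x ^ (β + ζ - 1) * (x ^ α) ^ (r + s) := by
    rw [show (ζ + α * (s:ℝ)) + (β + α * (r:ℝ)) - 1 = (β + ζ - 1) + α * (↑(r + s)) by
      push_cast; ring, Real.rpow_add hx, Real.rpow_mul hx.le,
      Real.rpow_natCast]
  rw [hxpow, harg3, harg1, harg2, Hterm]
  simp only
  rw [mul_pow (b) (x ^ α) (r + s), pow_add b r s]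
  field_simp

theorem mittagLeffler_convolution (α β γ ζ σ a x : ℝ)
    (hα : 0 < α) (hβ : 0 < β) (hγ : 0 < γ) (hζ : 0 < ζ) (hσ : 0 < σ) (hx : 0 < x) :
    ∫ t in (0:ℝ)..x,
        (x - t) ^ (β - 1) * mittagLeffler α β γ (a * (x - t) ^ α) *
          (t ^ (ζ - 1) * mittagLeffler α ζ σ (a * t ^ α))
      = x ^ (β + ζ - 1) * mittagLeffler α (β + ζ) (γ + σ) (a * x ^ α) := by
  set F : ℕ × ℕ → ℝ → ℝ := fun p t =>
    ((∏ i ∈ Finset.range p.1, (γ + (i:ℝ))) * a ^ p.1 /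
        (p.1.factorial * Real.Gamma (α * p.1 + β)) * (x - t) ^ (β - 1 + α * p.1)) *
    ((∏ i ∈ Finset.range p.2, (σ + (i:ℝ))) * a ^ p.2 /
        (p.2.factorial * Real.Gamma (α * p.2 + ζ)) * t ^ (ζ - 1 + α * p.2)) with hF
  -- step 1 : pointwise expansion
  have step1 : Set.EqOn
      (fun t => (x - t) ^ (β - 1) * mittagLeffler α β γ (a * (x - t) ^ α) *
          (t ^ (ζ - 1) * mittagLeffler α ζ σ (a * t ^ α)))
      (fun t => ∑' p : ℕ × ℕ, F p t) (Set.Ioo 0 x) := by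
    intro t ht
    have hu1 : 0 < x - t := by simp only [Set.mem_Ioo] at ht; linarith [ht.2]
    have hu2 : 0 < t := ht.1
    simp only
    rw [ml_expand hβ a hu1, ml_expand hζ a hu2]
    exact tsum_mul_tsum_of_summable_norm
      (ml_expand_norm_summable hα hβ hγ a hu1)
      (ml_expand_norm_summable hα hζ hσ a hu2)
  -- step 2 : integrability of each term
  have step2 : ∀ p : ℕ × ℕ, IntegrableOn (F p) (Set.Ioo 0 x) volume := by
    rintro ⟨r, s⟩
    have h1 : IntervalIntegrable
        (fun t => t ^ ((ζ + α * s) - 1) * (x - t) ^ ((β + α * r) - 1)) volume 0 x :=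
      beta_integrable (by positivity) (by positivity) hx
    rw [show (ζ + α * (s:ℝ)) - 1 = ζ - 1 + α * s by ring,
      show (β + α * (r:ℝ)) - 1 = β - 1 + α * r by ring] at h1
    have h2 : IntegrableOn
        (fun t => t ^ (ζ - 1 + α * s) * (x - t) ^ (β - 1 + α * r)) (Set.Ioo 0 x) volume :=
      ((intervalIntegrable_iff_integrableOn_Ioc_of_le hx.le).mp h1).mono_set
        Set.Ioo_subset_Ioc_self
    have heq : F (r, s) = fun t =>
        (((∏ i ∈ Finset.range r, (γ + (i:ℝ))) * a ^ r /
            (r.factorial * Real.Gamma (α * r + β))) *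
          ((∏ i ∈ Finset.range s, (σ + (i:ℝ))) * a ^ s /
            (s.factorial * Real.Gamma (α * s + ζ)))) *
        (t ^ (ζ - 1 + α * s) * (x - t) ^ (β - 1 + α * r)) := by
      funext t; simp only [hF]; ring
    rw [heq]
    exact h2.const_mul _
  -- step 3 : norm integrals and their summability
  have hnormeq : ∀ p : ℕ × ℕ, (∫ t in Set.Ioo (0:ℝ) x, ‖F p t‖)
      = x ^ (β + ζ - 1) * Hterm α (β + ζ) γ σ (|a| * x ^ α) p := by
    rintro ⟨r, s⟩
    have habs : Set.EqOn (fun t => ‖F (r, s) t‖)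
        (fun t => ((∏ i ∈ Finset.range r, (γ + (i:ℝ))) * |a| ^ r /
            (r.factorial * Real.Gamma (α * r + β)) * (x - t) ^ (β - 1 + α * r)) *
          ((∏ i ∈ Finset.range s, (σ + (i:ℝ))) * |a| ^ s /
            (s.factorial * Real.Gamma (α * s + ζ)) * t ^ (ζ - 1 + α * s)))
        (Set.Ioo 0 x) := by
      intro t ht
      have hu1 : 0 < x - t := by simp only [Set.mem_Ioo] at ht; linarith [ht.2]
      have hu2 : 0 < t := ht.1
      simp only [hF, Real.norm_eq_abs, abs_mul, abs_coeff hβ hγ hα, abs_coeff hζ hσ hα,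
        abs_of_pos (Real.rpow_pos_of_pos hu1 _), abs_of_pos (Real.rpow_pos_of_pos hu2 _)]
    rw [MeasureTheory.setIntegral_congr_fun measurableSet_Ioo habs,
      conv_term_value hα hβ hζ hx _ _ r s, term_bridge hα hβ hζ hγ hσ hx (|a|) r s]
  have hnormsum : Summable fun p : ℕ × ℕ => ∫ t in Set.Ioo (0:ℝ) x, ‖F p t‖ :=
    (((doub_summable hα (by positivity) hγ hσ (|a| * x ^ α)).mul_left
      (x ^ (β + ζ - 1)))).congr fun p => (hnormeq p).symm
  -- assemble
  rw [intervalIntegral.integral_of_le hx.le, MeasureTheory.integral_Ioc_eq_integral_Ioo,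
    MeasureTheory.setIntegral_congr_fun measurableSet_Ioo step1]
  have hint := MeasureTheory.hasSum_integral_of_summable_integral_norm
    (μ := volume.restrict (Set.Ioo (0:ℝ) x)) (F := F) step2 hnormsum
  rw [← hint.tsum_eq]
  have hterm : ∀ p : ℕ × ℕ, (∫ t in Set.Ioo (0:ℝ) x, F p t)
      = x ^ (β + ζ - 1) * Hterm α (β + ζ) γ σ (a * x ^ α) p := by
    rintro ⟨r, s⟩
    exact (conv_term_value hα hβ hζ hx _ _ r s).trans (term_bridge hα hβ hζ hγ hσ hx a r s)
  rw [tsum_congr hterm, tsum_mul_left, doub_tsum hα (by positivity) hγ hσ (a * x ^ α)]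
  rfl
end doub
end

section
/- For α > 0, t > 0, n ∈ ℕ: (1/Γ(α)²) [ 2 ∫₀ᵗ ∫₀^s (t−s)^{α−1}(t−w)^{α−1} (n w/t + n(n−1) w s/t²) dw ds ] = 2 n t^{2α} Γ(2α) / (α Γ(α)² Γ(2α+2)) + n(n−1) t^{2α}/Γ(α+2)². Probabilistically, E{ [𝒩^α(t)]² | N(t)=n } equals the right-hand side, where 𝒩^α(t) = (1/Γ(α)) ∫₀ᵗ (t−s)^{α−1} N(s) ds. -/
open MeasureTheory Real

/-!
Integrating first in `w`, the inner integral `∫₀ˢ (t - w)^(α-1) w dw` becomes elementary after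
`v = t - w`. Substituting `u = t - s` in the outer integral leaves a combination of the five powers
`u^(α-1), u^α, u^(2α-1), u^(2α), u^(2α+1)`, each integrated by `∫₀ᵗ u^p = t^(p+1)/(p+1)`.
The Gamma quotients on the right collapse by `Γ(x + 2) = (x + 1) x Γ(x)`.
-/

theorem integral_finsetSum_mul_rpow {ι : Type*} (s : Finset ι) (c p : ι → ℝ)
    (hp : ∀ i ∈ s, -1 < p i) (t : ℝ) :
    ∫ u in (0:ℝ)..t, ∑ i ∈ s, c i * u ^ p i = ∑ i ∈ s, c i * t ^ (p i + 1) / (p i + 1) := by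
  rw [intervalIntegral.integral_finsetSum fun i hi =>
    (intervalIntegral.intervalIntegrable_rpow' (hp i hi)).const_mul (c i)]
  refine Finset.sum_congr rfl fun i hi => ?_
  rw [intervalIntegral.integral_const_mul, integral_rpow (Or.inl (hp i hi)),
    zero_rpow (by linarith [hp i hi]), sub_zero, mul_div_assoc]

theorem integral_sub_rpow_mul_self {α : ℝ} (hα : 0 < α) {s t : ℝ} (hs : 0 ≤ s) (hst : s ≤ t) :
    ∫ w in (0:ℝ)..s, (t - w) ^ (α - 1) * w
      = t * (t ^ α - (t - s) ^ α) / α - (t ^ (α + 1) - (t - s) ^ (α + 1)) / (α + 1) := by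
  have hsub := intervalIntegral.integral_comp_sub_left (fun v => v ^ (α - 1) * (t - v)) t
    (a := 0) (b := s)
  simp only [sub_sub_cancel, sub_zero] at hsub
  have hsplit : ∀ v ∈ Set.uIcc (t - s) t, v ^ (α - 1) * (t - v) = t * v ^ (α - 1) - v ^ α := by
    intro v hv
    rw [Set.uIcc_of_le (by linarith)] at hv
    have hpow := rpow_add_one' (by linarith [hv.1] : 0 ≤ v) (by linarith : α - 1 + 1 ≠ 0)
    rw [sub_add_cancel] at hpow
    linear_combination hpow
  have hα1 : -1 < α - 1 := by linarith
  rw [hsub, intervalIntegral.integral_congr hsplit, intervalIntegral.integral_sub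
    ((intervalIntegral.intervalIntegrable_rpow' hα1).const_mul t)
    (intervalIntegral.intervalIntegrable_rpow' (by linarith)), intervalIntegral.integral_const_mul,
    integral_rpow (Or.inl hα1), integral_rpow (Or.inl (by linarith)), sub_add_cancel, mul_div_assoc]

theorem integral_rpow_mul_affine_mul {α : ℝ} (hα : 0 < α) {t : ℝ} (ht : 0 < t) (a b : ℝ) :
    ∫ u in (0:ℝ)..t, u ^ (α - 1) * (a + b * (t - u)) *
        (t * (t ^ α - u ^ α) / α - (t ^ (α + 1) - u ^ (α + 1)) / (α + 1))
      = a * t ^ (2 * α + 1) / (2 * α ^ 2 * (2 * α + 1))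
        + b * t ^ (2 * α + 2) / (2 * α ^ 2 * (α + 1) ^ 2) := by
  set A := a + b * t
  set C := t * t ^ α / α - t ^ (α + 1) / (α + 1)
  set c : Fin 5 → ℝ := ![A * C, -b * C, -A * t / α, A / (α + 1) + b * t / α, -b / (α + 1)]
  set p : Fin 5 → ℝ := ![α - 1, α, 2 * α - 1, 2 * α, 2 * α + 1]
  -- only on `(0, t]`: at `u = 0`, `0 ^ (α - 1) * 0 ^ α = 0 ^ (2α - 1)` fails for `α = 1/2`
  have hexpand : ∀ u ∈ Set.uIoc (0:ℝ) t, u ^ (α - 1) * (a + b * (t - u)) *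
        (t * (t ^ α - u ^ α) / α - (t ^ (α + 1) - u ^ (α + 1)) / (α + 1))
      = ∑ i, c i * u ^ p i := by
    intro u hu
    rw [Set.uIoc_of_le ht.le] at hu
    have hu0 : u ≠ 0 := hu.1.ne'
    simp only [Fin.sum_univ_five, c, p, A, C, Matrix.cons_val]
    rw [rpow_sub_one hu0, rpow_add_one hu0, rpow_sub_one hu0, rpow_add_one hu0, two_mul,
      rpow_add hu.1]
    field_simp
    ring
  have hp : ∀ i ∈ Finset.univ, -1 < p i := by
    intro i _
    fin_cases i <;> simp [p] <;> linarith
  rw [intervalIntegral.integral_congr_ae (Filter.Eventually.of_forall hexpand),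
    integral_finsetSum_mul_rpow _ _ _ hp]
  simp only [Fin.sum_univ_five, c, p, A, C, Matrix.cons_val]
  have ht0 : t ≠ 0 := ht.ne'
  rw [show 2 * α + 2 = 2 * α + 1 + 1 by ring]
  simp only [sub_add_cancel, rpow_add_one ht0]
  rw [two_mul, rpow_add ht]
  field_simp
  ring

theorem integral_integral_sub_rpow_mul_sub_rpow_mul {α : ℝ} (hα : 0 < α) {t : ℝ} (ht : 0 < t)
    (a b : ℝ) :
    ∫ s in (0:ℝ)..t, ∫ w in (0:ℝ)..s, (t - s) ^ (α - 1) * (t - w) ^ (α - 1) * (a * w + b * w * s)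
      = a * t ^ (2 * α + 1) / (2 * α ^ 2 * (2 * α + 1))
        + b * t ^ (2 * α + 2) / (2 * α ^ 2 * (α + 1) ^ 2) := by
  set f : ℝ → ℝ := fun u => u ^ (α - 1) * (a + b * (t - u)) *
    (t * (t ^ α - u ^ α) / α - (t ^ (α + 1) - u ^ (α + 1)) / (α + 1))
  have hinner : ∀ s ∈ Set.uIcc 0 t,
      ∫ w in (0:ℝ)..s, (t - s) ^ (α - 1) * (t - w) ^ (α - 1) * (a * w + b * w * s) = f (t - s) := by
    intro s hs
    rw [Set.uIcc_of_le ht.le] at hs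
    calc _ = (t - s) ^ (α - 1) * (a + b * s) * ∫ w in (0:ℝ)..s, (t - w) ^ (α - 1) * w := by
          rw [← intervalIntegral.integral_const_mul]
          exact intervalIntegral.integral_congr fun w _ => by ring
      _ = f (t - s) := by
          rw [integral_sub_rpow_mul_self hα hs.1 hs.2]
          simp only [f, sub_sub_cancel]
  rw [intervalIntegral.integral_congr hinner, intervalIntegral.integral_comp_sub_left f t,
    sub_self, sub_zero]
  exact integral_rpow_mul_affine_mul hα ht a b

theorem Real.Gamma_add_two {x : ℝ} (h₀ : x ≠ 0) (h₁ : x + 1 ≠ 0) :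
    Gamma (x + 2) = (x + 1) * x * Gamma x := by
  rw [show x + 2 = x + 1 + 1 by ring, Gamma_add_one h₁, Gamma_add_one h₀, mul_assoc]

/-- Conditional second moment of the Riemann--Liouville fractional integral of the
Poisson process: with `E{N(w)N(s)|N(t)=n} = nw/t + n(n−1)ws/t²` for `w < s < t`,
`E{[𝒩^α(t)]²|N(t)=n} = 2n t^{2α}Γ(2α)/(αΓ(α)²Γ(2α+2)) + n(n−1)t^{2α}/Γ(α+2)²`. -/
theorem frac_integral_conditional_second_moment (α t : ℝ) (hα : 0 < α) (ht : 0 < t) (n : ℕ) :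
    (1 / Real.Gamma α ^ 2) *
        (2 * ∫ s in (0:ℝ)..t, ∫ w in (0:ℝ)..s,
          (t - s) ^ (α - 1) * (t - w) ^ (α - 1) *
            ((n : ℝ) * w / t + (n : ℝ) * ((n : ℝ) - 1) * w * s / t ^ 2))
      = 2 * (n : ℝ) * t ^ (2 * α) * Real.Gamma (2 * α) /
          (α * Real.Gamma α ^ 2 * Real.Gamma (2 * α + 2)) +
        (n : ℝ) * ((n : ℝ) - 1) * t ^ (2 * α) / Real.Gamma (α + 2) ^ 2 := by
  have hcoeff : ∀ s w : ℝ, (n : ℝ) * w / t + n * (n - 1) * w * s / t ^ 2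
      = n / t * w + n * (n - 1) / t ^ 2 * w * s := fun s w => by ring
  simp_rw [hcoeff]
  rw [integral_integral_sub_rpow_mul_sub_rpow_mul hα ht, Gamma_add_two (x := α) (by positivity)
    (by positivity), Gamma_add_two (x := 2 * α) (by positivity) (by positivity),
    rpow_add_one ht.ne', rpow_add ht, rpow_two]
  have hΓα := Gamma_pos_of_pos hα
  have hΓ2α := Gamma_pos_of_pos (by linarith : 0 < 2 * α)
  field_simp
end

section
/- For α > 0, λ > 0, t > 0: 2/Γ(α)² · ∫₀ᵗ ∫_s^t (t−s)^{α−1}(t−w)^{α−1}(λ s + λ² s w) dw ds = λ t^{2α+1}/((2α+1)Γ(α+1)²) + λ² t^{2α+2}/Γ(α+2)². Consequently, the variance of the fractional integral 𝒩^α(t) of a homogeneous Poisson process with rate λ equals λ t^{2α+1}/((2α+1)Γ(α+1)²). -/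
/-!
Both integrals are Riemann–Liouville integrals of polynomials: after the substitution
`u = t - w` the inner integral is `∫₀^{t-s} u^{α-1}·(affine in u)`, and multiplying by
`(t-s)^{α-1}` turns the outer integrand into `(t-s)^{2α-1}·(quadratic in s)`. Everything then
reduces to `∫₀^c u^r = c^{r+1}/(r+1)`, and `Γ(α+2) = (α+1)αΓ(α)` matches the result with the
stated form; the variance follows by subtracting the squared mean.
-/

open MeasureTheory Real

theorem integral_rpow_of_neg_one_lt {r : ℝ} (hr : -1 < r) (c : ℝ) :
    ∫ u in (0:ℝ)..c, u ^ r = c ^ (r + 1) / (r + 1) := by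
  rw [integral_rpow (Or.inl hr), zero_rpow (by linarith), sub_zero]

theorem integral_rpow_sub_one_mul_quadratic {β : ℝ} (hβ : 0 < β) (c A B C : ℝ) :
    ∫ u in (0:ℝ)..c, u ^ (β - 1) * (A + B * u + C * u ^ 2) =
      A * c ^ β / β + B * c ^ (β + 1) / (β + 1) + C * c ^ (β + 2) / (β + 2) := by
  have hsplit : ∀ᵐ u, u ∈ Set.uIoc 0 c → u ^ (β - 1) * (A + B * u + C * u ^ 2) =
      A * u ^ (β - 1) + B * u ^ (β - 1 + 1) + C * u ^ (β - 1 + (2 : ℕ)) := by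
    filter_upwards [volume.ae_ne 0] with u hu _
    rw [rpow_add_one hu, rpow_add_natCast hu]
    ring
  have hint : ∀ r : ℝ, -1 < r → ∀ D : ℝ, IntervalIntegrable (fun u : ℝ => D * u ^ r) volume 0 c :=
    fun r hr D => (intervalIntegral.intervalIntegrable_rpow' hr).const_mul D
  have h0 := hint (β - 1) (by linarith) A
  have h1 := hint (β - 1 + 1) (by linarith) B
  have h2 := hint (β - 1 + (2 : ℕ)) (by push_cast; linarith) C
  rw [intervalIntegral.integral_congr_ae hsplit, intervalIntegral.integral_add (h0.add h1) h2,
    intervalIntegral.integral_add h0 h1, intervalIntegral.integral_const_mul,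
    intervalIntegral.integral_const_mul, intervalIntegral.integral_const_mul,
    integral_rpow_of_neg_one_lt (by linarith), integral_rpow_of_neg_one_lt (by linarith),
    integral_rpow_of_neg_one_lt (by push_cast; linarith)]
  push_cast
  ring_nf

theorem integral_sub_rpow_mul_quadratic {β : ℝ} (hβ : 0 < β) (s t A B C : ℝ) :
    ∫ w in s..t, (t - w) ^ (β - 1) * (A + B * w + C * w ^ 2) =
      (A + B * t + C * t ^ 2) * (t - s) ^ β / β - (B + 2 * C * t) * (t - s) ^ (β + 1) / (β + 1)
        + C * (t - s) ^ (β + 2) / (β + 2) := by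
  have hshift : (fun w => (t - w) ^ (β - 1) * (A + B * w + C * w ^ 2)) = fun w =>
      (fun u => u ^ (β - 1) * ((A + B * t + C * t ^ 2) + -(B + 2 * C * t) * u + C * u ^ 2)) (t - w) := by
    funext w; ring
  rw [hshift, intervalIntegral.integral_comp_sub_left (fun u => u ^ (β - 1) * ((A + B * t + C * t ^ 2) + -(B + 2 * C * t) * u + C * u ^ 2)), sub_self, integral_rpow_sub_one_mul_quadratic hβ]
  ring

theorem integral_integral_sub_rpow_mul_sub_rpow {α : ℝ} (hα : 0 < α) {t : ℝ} (ht : 0 < t) (lam : ℝ) :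
    ∫ s in (0:ℝ)..t, ∫ w in s..t,
        (t - s) ^ (α - 1) * (t - w) ^ (α - 1) * (lam * s + lam ^ 2 * s * w) =
      lam * t ^ (2 * α + 1) / (2 * α ^ 2 * (2 * α + 1)) +
        lam ^ 2 * t ^ (2 * α + 2) / (2 * α ^ 2 * (α + 1) ^ 2) := by
  have hinner : ∀ s, ∫ w in s..t,
      (t - s) ^ (α - 1) * (t - w) ^ (α - 1) * (lam * s + lam ^ 2 * s * w) =
        (t - s) ^ (α - 1) * (lam * (1 + lam * t) * s * (t - s) ^ α / α
          - lam ^ 2 * s * (t - s) ^ (α + 1) / (α + 1)) := by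
    intro s
    have h := integral_sub_rpow_mul_quadratic hα s t (lam * s) (lam ^ 2 * s) 0
    simp only [zero_mul, add_zero, mul_zero] at h
    simp_rw [mul_assoc ((t - s) ^ (α - 1)), intervalIntegral.integral_const_mul, h]
    ring
  have houter : ∀ᵐ s, s ∈ Set.uIoc 0 t →
      (t - s) ^ (α - 1) * (lam * (1 + lam * t) * s * (t - s) ^ α / α
          - lam ^ 2 * s * (t - s) ^ (α + 1) / (α + 1)) =
        (t - s) ^ (2 * α - 1) * (0 + (lam * (1 + lam * t) / α - lam ^ 2 * t / (α + 1)) * s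
          + lam ^ 2 / (α + 1) * s ^ 2) := by
    -- `s = t` must be excluded: for `α = 1/2`, `0 ^ (α - 1) * 0 ^ α = 0 ≠ 1 = 0 ^ (2 * α - 1)`.
    filter_upwards [volume.ae_ne t] with s hst hs
    rw [Set.uIoc_of_le ht.le] at hs
    have hpos : 0 < t - s := sub_pos.2 (lt_of_le_of_ne hs.2 hst)
    have e1 : (t - s) ^ (α - 1) * (t - s) ^ α = (t - s) ^ (2 * α - 1) := by
      rw [← rpow_add hpos]; ring_nf
    rw [rpow_add_one hpos.ne']
    linear_combination (s * (lam * (1 + lam * t) / α - lam ^ 2 * (t - s) / (α + 1))) * e1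
  rw [intervalIntegral.integral_congr (fun s _ => hinner s), intervalIntegral.integral_congr_ae houter,
    integral_sub_rpow_mul_quadratic (by linarith : 0 < 2 * α), sub_zero,
    rpow_add_one ht.ne', show 2 * α + 2 = 2 * α + (2 : ℕ) by norm_num, rpow_add_natCast ht.ne']
  field_simp
  ring

theorem frac_integral_variance_general (α lam t : ℝ) (hα : 0 < α) (ht : 0 < t) :
    (2 / Real.Gamma α ^ 2) *
        ∫ s in (0:ℝ)..t, ∫ w in s..t,
          (t - s) ^ (α - 1) * (t - w) ^ (α - 1) * (lam * s + lam ^ 2 * s * w)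
      = lam * t ^ (2 * α + 1) / ((2 * α + 1) * Real.Gamma (α + 1) ^ 2) +
          lam ^ 2 * t ^ (2 * α + 2) / Real.Gamma (α + 2) ^ 2 ∧
    (2 / Real.Gamma α ^ 2) *
        (∫ s in (0:ℝ)..t, ∫ w in s..t,
          (t - s) ^ (α - 1) * (t - w) ^ (α - 1) * (lam * s + lam ^ 2 * s * w)) -
        (lam * t ^ (α + 1) / Real.Gamma (α + 2)) ^ 2
      = lam * t ^ (2 * α + 1) / ((2 * α + 1) * Real.Gamma (α + 1) ^ 2) := by
  have hΓ : Real.Gamma α ≠ 0 := (Real.Gamma_pos_of_pos hα).ne'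
  have hΓ1 : Real.Gamma (α + 1) = α * Real.Gamma α := Real.Gamma_add_one hα.ne'
  have hΓ2 : Real.Gamma (α + 2) = (α + 1) * (α * Real.Gamma α) := by
    rw [show α + 2 = α + 1 + 1 by ring, Real.Gamma_add_one (by linarith), hΓ1]
  have hmoment : (2 / Real.Gamma α ^ 2) *
        ∫ s in (0:ℝ)..t, ∫ w in s..t,
          (t - s) ^ (α - 1) * (t - w) ^ (α - 1) * (lam * s + lam ^ 2 * s * w)
      = lam * t ^ (2 * α + 1) / ((2 * α + 1) * Real.Gamma (α + 1) ^ 2) +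
          lam ^ 2 * t ^ (2 * α + 2) / Real.Gamma (α + 2) ^ 2 := by
    rw [integral_integral_sub_rpow_mul_sub_rpow hα ht, hΓ1, hΓ2]
    field_simp
  refine ⟨hmoment, ?_⟩
  rw [hmoment, div_pow, mul_pow, ← rpow_mul_natCast ht.le]
  ring_nf

/-- Second moment and variance of the fractional integral of the Poisson process:
`2/Γ(α)² ∫₀ᵗ∫ₛᵗ (t−s)^{α−1}(t−w)^{α−1}(λs+λ²sw) dw ds
  = λt^{2α+1}/((2α+1)Γ(α+1)²) + λ²t^{2α+2}/Γ(α+2)²`,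
so that `Var 𝒩^α(t) = λ t^{2α+1}/((2α+1)Γ(α+1)²)` after subtracting
`(E 𝒩^α(t))² = (λ t^{α+1}/Γ(α+2))²`. -/
theorem frac_integral_variance (α lam t : ℝ) (hα : 0 < α) (hlam : 0 < lam) (ht : 0 < t) :
    (2 / Real.Gamma α ^ 2) *
        ∫ s in (0:ℝ)..t, ∫ w in s..t,
          (t - s) ^ (α - 1) * (t - w) ^ (α - 1) * (lam * s + lam ^ 2 * s * w)
      = lam * t ^ (2 * α + 1) / ((2 * α + 1) * Real.Gamma (α + 1) ^ 2) +
          lam ^ 2 * t ^ (2 * α + 2) / Real.Gamma (α + 2) ^ 2 ∧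
    (2 / Real.Gamma α ^ 2) *
        (∫ s in (0:ℝ)..t, ∫ w in s..t,
          (t - s) ^ (α - 1) * (t - w) ^ (α - 1) * (lam * s + lam ^ 2 * s * w)) -
        (lam * t ^ (α + 1) / Real.Gamma (α + 2)) ^ 2
      = lam * t ^ (2 * α + 1) / ((2 * α + 1) * Real.Gamma (α + 1) ^ 2) :=
  frac_integral_variance_general α lam t hα ht
end
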